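/- arXiv:2110.11021 — 3 statements merged into one kernel-verified Lean document; each statement's English description precedes it below -/
import Mathlib

section
/- Let η ∈ ℝ, δ_1, …, δ_N ∈ ℝ with 1 + δ_l ≠ 0 for all relevant l, and suppose real numbers ℓ̃_0, ℓ̃_1, …, ℓ̃_{N−1} satisfy the equations (δ_N − δ_{N−k+1}·η^{k−1})·(ℓ̃_0 + η) = ∑_{j=1}^{k−1} (1 + δ_{N−k+1}·η^{k−1−j})·ℓ̃_j for every k ∈ {2, …, N}. Then ℓ̃_k = a_k·(ℓ̃_0 + η) for all k ∈ {1, …, N−1}, where a_k := [(δ_{N−k+1} − η·δ_{N−k})/(δ_{N−k} + 1)] · ∏_{j=0}^{k−2} [(η + δ_{N−j})/(δ_{N−j−1} + 1)]. -/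
/-!
With `P = ℓ̃₀ + η` and the Horner sums `U m = η ^ m P + ∑_{j=1}^m η ^ (m - j) ℓ̃ⱼ`, the
equation for `k = m + 1` reads `∑_{j=1}^m ℓ̃ⱼ + δ_{N-m} U m = δ_N P`. Subtracting consecutive
equations and using `U (m+1) = η U m + ℓ̃_{m+1}` gives
`(1 + δ_{N-m-1}) ℓ̃_{m+1} = (δ_{N-m} - η δ_{N-m-1}) U m` and
`(1 + δ_{N-m-1}) U (m+1) = (η + δ_{N-m}) U m`, so `U m` is `P` times the telescoping product,
and the first identity then yields `ℓ̃_{m+1}`.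
-/

open Finset

section HornerSystem

variable {K : Type*} [Field K] (η P : K) (d ℓ : ℕ → K)

def hornerSum : ℕ → K
  | 0 => P
  | m + 1 => η * hornerSum m + ℓ (m + 1)

theorem hornerSum_eq (m : ℕ) :
    hornerSum η P ℓ m = η ^ m * P + ∑ j ∈ Icc 1 m, η ^ (m - j) * ℓ j := by
  induction m with
  | zero => simp [hornerSum]
  | succ m ih =>
    rw [hornerSum, ih, sum_Icc_succ_top (by omega), mul_add, mul_sum, Nat.sub_self, pow_zero,
      one_mul, pow_succ]
    have hpow : ∀ j ∈ Icc 1 m, η * (η ^ (m - j) * ℓ j) = η ^ (m + 1 - j) * ℓ j := fun j hj => by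
      rw [Nat.sub_add_comm (mem_Icc.1 hj).2, pow_succ]; ring
    rw [sum_congr rfl hpow]
    ring

variable {η P d ℓ}

theorem sum_add_mul_hornerSum_of_eq {m : ℕ}
    (h : (d 0 - d m * η ^ m) * P = ∑ j ∈ Icc 1 m, (1 + d m * η ^ (m - j)) * ℓ j) :
    ∑ j ∈ Icc 1 m, ℓ j + d m * hornerSum η P ℓ m = d 0 * P := by
  have hsplit : ∑ j ∈ Icc 1 m, (1 + d m * η ^ (m - j)) * ℓ j
      = ∑ j ∈ Icc 1 m, ℓ j + d m * ∑ j ∈ Icc 1 m, η ^ (m - j) * ℓ j := by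
    rw [mul_sum, ← sum_add_distrib]
    exact sum_congr rfl fun j _ => by ring
  rw [hornerSum_eq]
  linear_combination -h - hsplit

section Consecutive

variable {m : ℕ}
  (hm : ∑ j ∈ Icc 1 m, ℓ j + d m * hornerSum η P ℓ m = d 0 * P)
  (hm' : ∑ j ∈ Icc 1 (m + 1), ℓ j + d (m + 1) * hornerSum η P ℓ (m + 1) = d 0 * P)
include hm hm'

theorem mul_succ_eq_mul_hornerSum :
    ℓ (m + 1) * (d (m + 1) + 1) = (d m - η * d (m + 1)) * hornerSum η P ℓ m := by
  rw [sum_Icc_succ_top (by omega), hornerSum] at hm'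
  linear_combination hm' - hm

theorem hornerSum_succ_mul :
    hornerSum η P ℓ (m + 1) * (d (m + 1) + 1) = (η + d m) * hornerSum η P ℓ m := by
  rw [hornerSum, add_mul, mul_succ_eq_mul_hornerSum hm hm']
  ring

end Consecutive

theorem hornerSum_eq_prod_mul {m : ℕ}
    (hsys : ∀ j ≤ m, ∑ i ∈ Icc 1 j, ℓ i + d j * hornerSum η P ℓ j = d 0 * P)
    (hden : ∀ j < m, d (j + 1) + 1 ≠ 0) :
    hornerSum η P ℓ m = (∏ j ∈ range m, (η + d j) / (d (j + 1) + 1)) * P := by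
  induction m with
  | zero => simp [hornerSum]
  | succ m ih =>
    have hU := hornerSum_succ_mul (hsys m (by omega)) (hsys (m + 1) le_rfl)
    rw [ih (fun j hj => hsys j (by omega)) (fun j hj => hden j (by omega))] at hU
    have hd := hden m (by omega)
    rw [prod_range_succ, ← mul_left_inj' hd, hU]
    field_simp

theorem eq_div_mul_prod_mul {m : ℕ}
    (hsys : ∀ j ≤ m + 1, ∑ i ∈ Icc 1 j, ℓ i + d j * hornerSum η P ℓ j = d 0 * P)
    (hden : ∀ j < m + 1, d (j + 1) + 1 ≠ 0) :
    ℓ (m + 1) = (d m - η * d (m + 1)) / (d (m + 1) + 1) *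
      (∏ j ∈ range m, (η + d j) / (d (j + 1) + 1)) * P := by
  have hℓ := mul_succ_eq_mul_hornerSum (hsys m (by omega)) (hsys (m + 1) le_rfl)
  rw [hornerSum_eq_prod_mul (fun j hj => hsys j (by omega)) (fun j hj => hden j (by omega))] at hℓ
  have hd := hden m (by omega)
  rw [← mul_left_inj' hd, hℓ]
  field_simp

end HornerSystem

/-- Explicit solution of the linear system (Lemma analytic_ab): if
`(δ N - δ (N-k+1) η^{k-1}) (ℓ̃ 0 + η) = ∑_{j=1}^{k-1} (1 + δ (N-k+1) η^{k-1-j}) ℓ̃ j`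
for all `k ∈ {2, …, N}`, then for all `k ∈ {1, …, N-1}`,
`ℓ̃ k = a_k (ℓ̃ 0 + η)` with
`a_k = ((δ (N-k+1) - η δ (N-k))/(δ (N-k) + 1)) ∏_{j=0}^{k-2} ((η + δ (N-j))/(δ (N-j-1) + 1))`. -/
theorem analytic_ab (N : ℕ) (η : ℝ) (δ : ℕ → ℝ)
    (hden : ∀ l ≤ N, 1 + δ l ≠ 0) (ℓt : ℕ → ℝ)
    (hsys : ∀ k, 2 ≤ k → k ≤ N →
      (δ N - δ (N - k + 1) * η ^ (k - 1)) * (ℓt 0 + η)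
        = ∑ j ∈ Finset.Icc 1 (k - 1), (1 + δ (N - k + 1) * η ^ (k - 1 - j)) * ℓt j) :
    ∀ k, 1 ≤ k → k ≤ N - 1 →
      ℓt k = ((δ (N - k + 1) - η * δ (N - k)) / (δ (N - k) + 1)) *
          (∏ j ∈ Finset.range (k - 1), ((η + δ (N - j)) / (δ (N - j - 1) + 1))) *
          (ℓt 0 + η) := by
  intro k hk hkN
  obtain ⟨m, rfl⟩ : ∃ m, k = m + 1 := ⟨k - 1, by omega⟩
  have hreduced : ∀ j ≤ m + 1, ∑ i ∈ Icc 1 j, ℓt i +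
      δ (N - j) * hornerSum η (ℓt 0 + η) ℓt j = δ (N - 0) * (ℓt 0 + η) := by
    rintro (_ | j) hj
    · simp [hornerSum]
    · refine sum_add_mul_hornerSum_of_eq (d := fun i => δ (N - i)) ?_
      have h := hsys (j + 1 + 1) (by omega) (by omega)
      rwa [show N - (j + 1 + 1) + 1 = N - (j + 1) by omega, Nat.add_sub_cancel] at h
  rw [show N - (m + 1) + 1 = N - m by omega, Nat.add_sub_cancel]
  exact eq_div_mul_prod_mul (d := fun i => δ (N - i)) hreduced
    fun j _ => by rw [add_comm]; exact hden _ (Nat.sub_le _ _)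
end

section
/- Let N ≥ 1, η ∈ ℝ, and δ_1,…,δ_N ∈ ℝ with 1 + δ_l ≠ 0. Define a_k := [(δ_{N−k+1} − η·δ_{N−k})/(δ_{N−k}+1)] · ∏_{j=0}^{k−2}[(η+δ_{N−j})/(δ_{N−j−1}+1)] for k ∈ {1,…,N−1}. Then ∑_{k=1}^{N−1} a_k = δ_N − δ_1 · ∏_{j=0}^{N−2} [(η+δ_{N−j})/(1+δ_{N−j−1})]. -/
/-!
With `d i = δ (N - i)` and `r j = (η + δ (N - j)) / (δ (N - j - 1) + 1)`, the coefficient `a_{i+1}`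
equals `(d i - d (i + 1) * r i) * ∏_{j < i} r j`, which is the difference of consecutive values of
`i ↦ d i * ∏_{j < i} r j`; the sum therefore telescopes.
-/

open Finset

theorem sum_range_sub_mul_prod {R : Type*} [CommRing R] (d r : ℕ → R) (n : ℕ) :
    ∑ i ∈ range n, (d i - d (i + 1) * r i) * ∏ j ∈ range i, r j
      = d 0 - d n * ∏ j ∈ range n, r j := by
  have h := sum_range_sub' (fun i => d i * ∏ j ∈ range i, r j) n
  simp only [prod_range_succ, prod_range_zero, mul_one] at h
  rw [← h]
  exact sum_congr rfl fun i _ => by ring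

theorem sub_mul_div_add_one {K : Type*} [Field K] {a b c : K} (hb : b + 1 ≠ 0) :
    (a - c * b) / (b + 1) = a - b * ((c + a) / (b + 1)) := by
  field_simp
  ring

theorem sum_Icc_one_eq_sum_range {M : Type*} [AddCommMonoid M] (f : ℕ → M) (n : ℕ) :
    ∑ k ∈ Icc 1 n, f k = ∑ i ∈ range n, f (i + 1) := by
  rw [range_eq_Ico, sum_Ico_add' f 0 n 1, zero_add, Ico_add_one_right_eq_Icc]

/-- Closed-form sum of the coefficients `a_k`:
`∑_{k=1}^{N-1} a_k = δ N - δ 1 ∏_{j=0}^{N-2} ((η + δ (N-j))/(1 + δ (N-j-1)))`,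
where `a_k = ((δ (N-k+1) - η δ (N-k))/(δ (N-k) + 1)) ∏_{j=0}^{k-2} ((η + δ (N-j))/(δ (N-j-1) + 1))`. -/
theorem sum_of_a_coeffs (N : ℕ) (hN : 1 ≤ N) (η : ℝ) (δ : ℕ → ℝ)
    (hden : ∀ l ≤ N, 1 + δ l ≠ 0) :
    ∑ k ∈ Finset.Icc 1 (N - 1),
        ((δ (N - k + 1) - η * δ (N - k)) / (δ (N - k) + 1)) *
          ∏ j ∈ Finset.range (k - 1), ((η + δ (N - j)) / (δ (N - j - 1) + 1))
      = δ N - δ 1 * ∏ j ∈ Finset.range (N - 1), ((η + δ (N - j)) / (1 + δ (N - j - 1))) := by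
  set r : ℕ → ℝ := fun j => (η + δ (N - j)) / (δ (N - j - 1) + 1)
  have hcoeff : ∀ i ∈ range (N - 1),
      (δ (N - (i + 1) + 1) - η * δ (N - (i + 1))) / (δ (N - (i + 1)) + 1) * ∏ j ∈ range i, r j
        = (δ (N - i) - δ (N - (i + 1)) * r i) * ∏ j ∈ range i, r j := by
    intro i hi
    have hi : i < N - 1 := mem_range.mp hi
    rw [show N - (i + 1) + 1 = N - i by omega, show N - (i + 1) = N - i - 1 by omega,
      sub_mul_div_add_one (by rw [add_comm]; exact hden _ (by omega))]
  rw [sum_Icc_one_eq_sum_range]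
  simp only [Nat.add_sub_cancel]
  rw [sum_congr rfl hcoeff, sum_range_sub_mul_prod (fun i => δ (N - i)) r,
    Nat.sub_zero, Nat.sub_sub_self hN]
  simp only [r, add_comm (δ _) 1]
end

section
/- Suppose nonnegative real sequences satisfy: γ_{k,f} = ∑_{j=0}^{k−1} c_j + c_{k,f} with c_{k+k_2} ≤ c_k·c_{k_2}, c_{k+k_2,f} ≤ c_k·c_{k_2,f} for all k, k_2 ≥ 0, and c_k + c_{k+1,f} ≤ (1+ε_f)·c_{k,f} for all k ≥ 0, where c_j, c_{j,f} ≥ 0 and ε_f > 0. Then for every N ≥ 2, every k ∈ {1,…,N−1}, and every l ≥ 0: ε_f·[∑_{n=l+1}^{N−k+l} c_n + c_{N−k+1+l,f}]·∏_{i=2}^{N−k}(γ_{i,f} − 1) ≥ (1+ε_f)·(c_{N−k+l} + c_{N−k+1+l,f} − c_{N−k+l,f})·∏_{i=2}^{N−k} γ_{i,f}, provided additionally γ_{i,f} ≥ 1 for all i ≥ 1. -/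
/-!
With `m = N - k` and `tail m l = ∑_{n=l+1}^{m+l} c n + c_f (m+1+l)`, induct on `m ≥ 1`
simultaneously for all `l`; for `m = 1` the claim is the shift hypothesis at `l + 1`.
Peeling off the first summand gives `tail (m+1) l = c (l+1) + tail m (l+1)`, while
submultiplicativity gives `tail (m+1) l ≤ c (l+1) γ_{m+1}`. Together they yield
`tail m (l+1) γ_{m+1} ≤ tail (m+1) l (γ_{m+1} - 1)`, exactly the factor that carries the
inequality for `m` at `l + 1` to the one for `m + 1` at `l`.
-/

open Finset

namespace SubmultInduction

variable {c cf γf : ℕ → ℝ} {εf : ℝ}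

def tail (c cf : ℕ → ℝ) (m l : ℕ) : ℝ :=
  ∑ n ∈ Icc (l + 1) (m + l), c n + cf (m + 1 + l)

lemma sum_Icc_eq_sum_range {M : Type*} [AddCommMonoid M] (f : ℕ → M) (m l : ℕ) :
    ∑ n ∈ Icc (l + 1) (m + l), f n = ∑ j ∈ range m, f (l + 1 + j) := by
  rw [← Ico_add_one_right_eq_Icc, sum_Ico_eq_sum_range, show m + l + 1 - (l + 1) = m by omega]

lemma tail_eq (m l : ℕ) : tail c cf m l = ∑ j ∈ range m, c (l + 1 + j) + cf (m + 1 + l) := by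
  rw [tail, sum_Icc_eq_sum_range]

lemma tail_succ (m l : ℕ) : tail c cf (m + 1) l = c (l + 1) + tail c cf m (l + 1) := by
  simp only [tail_eq, sum_range_succ']
  ring_nf

lemma tail_succ_le (hγf : ∀ k, γf k = ∑ j ∈ range k, c j + cf k)
    (hsub : ∀ k k₂, c (k + k₂) ≤ c k * c k₂) (hsubf : ∀ k k₂, cf (k + k₂) ≤ c k * cf k₂)
    (m l : ℕ) : tail c cf (m + 1) l ≤ c (l + 1) * γf (m + 1) := by
  have hsum : ∑ j ∈ range (m + 1), c (l + 1 + j) ≤ c (l + 1) * ∑ j ∈ range (m + 1), c j := by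
    rw [mul_sum]
    exact sum_le_sum fun j _ => hsub _ _
  have hcf : cf (m + 1 + 1 + l) ≤ c (l + 1) * cf (m + 1) := by
    rw [show m + 1 + 1 + l = l + 1 + (m + 1) by omega]
    exact hsubf _ _
  rw [tail_eq, hγf, mul_add]
  exact add_le_add hsum hcf

lemma tail_mul_le (hγf : ∀ k, γf k = ∑ j ∈ range k, c j + cf k)
    (hsub : ∀ k k₂, c (k + k₂) ≤ c k * c k₂) (hsubf : ∀ k k₂, cf (k + k₂) ≤ c k * cf k₂)
    (m l : ℕ) : tail c cf m (l + 1) * γf (m + 1) ≤ tail c cf (m + 1) l * (γf (m + 1) - 1) := by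
  have h := tail_succ_le hγf hsub hsubf m l
  rw [tail_succ] at h ⊢
  linarith

lemma defect_le_tail_one (hshift : ∀ k, c k + cf (k + 1) ≤ (1 + εf) * cf k) (l : ℕ) :
    (1 + εf) * (c (1 + l) + cf (1 + 1 + l) - cf (1 + l)) ≤ εf * tail c cf 1 l := by
  have h := hshift (l + 1)
  rw [tail_eq, sum_range_one, show 1 + l = l + 1 by omega, show 1 + 1 + l = l + 1 + 1 by omega]
  linarith

theorem defect_mul_prod_le_tail_mul_prod (hεf : 0 ≤ εf)
    (hγf : ∀ k, γf k = ∑ j ∈ range k, c j + cf k)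
    (hsub : ∀ k k₂, c (k + k₂) ≤ c k * c k₂) (hsubf : ∀ k k₂, cf (k + k₂) ≤ c k * cf k₂)
    (hshift : ∀ k, c k + cf (k + 1) ≤ (1 + εf) * cf k) (hγ1 : ∀ i, 1 ≤ i → 1 ≤ γf i)
    (m : ℕ) (hm : 1 ≤ m) (l : ℕ) :
    (1 + εf) * (c (m + l) + cf (m + 1 + l) - cf (m + l)) * ∏ i ∈ Icc 2 m, γf i
      ≤ εf * tail c cf m l * ∏ i ∈ Icc 2 m, (γf i - 1) := by
  induction m, hm using Nat.le_induction generalizing l with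
  | base => simpa using defect_le_tail_one hshift l
  | succ m hm ih =>
    have hP : 0 ≤ ∏ i ∈ Icc 2 m, (γf i - 1) :=
      prod_nonneg fun i hi => sub_nonneg.mpr (hγ1 i (by grind))
    have hγ : 0 ≤ γf (m + 1) := zero_le_one.trans (hγ1 _ (by omega))
    have ih' := ih (l + 1)
    rw [show m + (l + 1) = m + 1 + l by omega, show m + 1 + (l + 1) = m + 1 + 1 + l by omega]
      at ih'
    rw [prod_Icc_succ_top (by omega), prod_Icc_succ_top (by omega)]
    calc _ = (1 + εf) * (c (m + 1 + l) + cf (m + 1 + 1 + l) - cf (m + 1 + l))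
              * (∏ i ∈ Icc 2 m, γf i) * γf (m + 1) := by ring
      _ ≤ εf * tail c cf m (l + 1) * (∏ i ∈ Icc 2 m, (γf i - 1)) * γf (m + 1) :=
          mul_le_mul_of_nonneg_right ih' hγ
      _ = εf * (∏ i ∈ Icc 2 m, (γf i - 1)) * (tail c cf m (l + 1) * γf (m + 1)) := by ring
      _ ≤ εf * (∏ i ∈ Icc 2 m, (γf i - 1)) * (tail c cf (m + 1) l * (γf (m + 1) - 1)) :=
          mul_le_mul_of_nonneg_left (tail_mul_le hγf hsub hsubf m l) (mul_nonneg hεf hP)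
      _ = _ := by ring

end SubmultInduction

theorem submult_induction_pdf_general (c cf γf : ℕ → ℝ) (εf : ℝ) (hεf : 0 < εf)
    (hγf : ∀ k, γf k = (∑ j ∈ Finset.range k, c j) + cf k)
    (hsub : ∀ k k₂, c (k + k₂) ≤ c k * c k₂)
    (hsubf : ∀ k k₂, cf (k + k₂) ≤ c k * cf k₂)
    (hshift : ∀ k, c k + cf (k + 1) ≤ (1 + εf) * cf k)
    (hγ1 : ∀ i, 1 ≤ i → 1 ≤ γf i) :
    ∀ N, 2 ≤ N → ∀ k, 1 ≤ k → k ≤ N - 1 → ∀ l : ℕ,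
      εf * ((∑ n ∈ Finset.Icc (l + 1) (N - k + l), c n) + cf (N - k + 1 + l)) *
          (∏ i ∈ Finset.Icc 2 (N - k), (γf i - 1))
        ≥ (1 + εf) * (c (N - k + l) + cf (N - k + 1 + l) - cf (N - k + l)) *
          (∏ i ∈ Finset.Icc 2 (N - k), γf i) := by
  intro N _ k _ hkN l
  exact SubmultInduction.defect_mul_prod_le_tail_mul_prod hεf.le hγf hsub hsubf hshift hγ1
    (N - k) (by omega) l

/-- Lemma (submult_induction_pdf): given nonnegative submultiplicative sequences
`c`, `c_f` with `γ_f k = ∑_{j<k} c j + c_f k`, `c_k + c_{k+1,f} ≤ (1+ε_f) c_{k,f}`,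
`ε_f > 0` and `γ_f i ≥ 1` for `i ≥ 1`, then for all `N ≥ 2`, `k ∈ {1,…,N-1}`, `l ≥ 0`:
`ε_f (∑_{n=l+1}^{N-k+l} c n + c_f (N-k+1+l)) ∏_{i=2}^{N-k} (γ_f i - 1)
  ≥ (1+ε_f) (c (N-k+l) + c_f (N-k+1+l) - c_f (N-k+l)) ∏_{i=2}^{N-k} γ_f i`. -/
theorem submult_induction_pdf (c cf γf : ℕ → ℝ) (εf : ℝ) (hεf : 0 < εf)
    (hc : ∀ k, 0 ≤ c k) (hcf : ∀ k, 0 ≤ cf k)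
    (hγf : ∀ k, γf k = (∑ j ∈ Finset.range k, c j) + cf k)
    (hsub : ∀ k k₂, c (k + k₂) ≤ c k * c k₂)
    (hsubf : ∀ k k₂, cf (k + k₂) ≤ c k * cf k₂)
    (hshift : ∀ k, c k + cf (k + 1) ≤ (1 + εf) * cf k)
    (hγ1 : ∀ i, 1 ≤ i → 1 ≤ γf i) :
    ∀ N, 2 ≤ N → ∀ k, 1 ≤ k → k ≤ N - 1 → ∀ l : ℕ,
      εf * ((∑ n ∈ Finset.Icc (l + 1) (N - k + l), c n) + cf (N - k + 1 + l)) *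
          (∏ i ∈ Finset.Icc 2 (N - k), (γf i - 1))
        ≥ (1 + εf) * (c (N - k + l) + cf (N - k + 1 + l) - cf (N - k + l)) *
          (∏ i ∈ Finset.Icc 2 (N - k), γf i) :=
  submult_induction_pdf_general c cf γf εf hεf hγf hsub hsubf hshift hγ1
end
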